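/- For all graphs G1, G2 and every integer k ≥ 2, α_k(G1 · G2) = α_k(G1) + ι(G1) · (α_k(G2) − 1), where ι(G1) is the number of isolated vertices of G1. -/

import Mathlib

open SimpleGraph

/-- The `k`-independence number: the maximum size of a set of vertices at pairwise
distance greater than `k`. -/
noncomputable def kIndepNum {V : Type*} [Fintype V] (G : SimpleGraph V) (k : ℕ) : ℕ :=
  sSup {n | ∃ s : Finset V, s.card = n ∧ ∀ u ∈ s, ∀ v ∈ s, u ≠ v → (k : ℕ∞) < G.edist u v}

/-- The lexicographic product of two simple graphs. -/
def lexProd {V1 V2 : Type*} (G1 : SimpleGraph V1) (G2 : SimpleGraph V2) :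
    SimpleGraph (V1 × V2) where
  Adj a b := G1.Adj a.1 b.1 ∨ (a.1 = b.1 ∧ G2.Adj a.2 b.2)
  symm := by
    constructor
    intro a b h
    rcases h with h | ⟨h1, h2⟩
    · exact Or.inl (G1.symm.symm _ _ h)
    · exact Or.inr ⟨h1.symm, G2.symm.symm _ _ h2⟩
  loopless := by
    constructor
    intro a h
    rcases h with h | ⟨_, h2⟩
    · exact G1.loopless.irrefl a.1 h
    · exact G2.loopless.irrefl a.2 h2

/-!
In `G1 · G2`, vertices with different first coordinates are exactly as far apart as those
coordinates are in `G1`; vertices over a common isolated vertex of `G1` are as far apart as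
in `G2`; and vertices over a common non-isolated vertex are at distance at most `2 ≤ k`.
Hence a `k`-independent set of the product projects to a `k`-independent set of `G1` and
meets each fiber over a non-isolated vertex at most once and each fiber over an isolated
vertex in a copy of a `k`-independent set of `G2`. Conversely, given maximum `k`-independent
sets `A` of `G1` and `B` of `G2`, one vertex over each non-isolated vertex of `A` and a copy of
`B` over every isolated vertex of `G1` form a `k`-independent set, and
`|A \ I| + |I| ≥ |A|` for the set `I` of isolated vertices.
-/

namespace SimpleGraph

variable {V W : Type*} {G : SimpleGraph V} {H : SimpleGraph W}

theorem edist_le_edist_of_adj_imp (f : V → W)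
    (hf : ∀ ⦃x y⦄, G.Adj x y → f x = f y ∨ H.Adj (f x) (f y)) (u v : V) :
    H.edist (f u) (f v) ≤ G.edist u v := by
  refine le_iInf fun p => ?_
  induction p with
  | nil => simp
  | @cons x y z h p ih =>
    have hxy : H.edist (f x) (f y) ≤ 1 :=
      edist_le_one_iff_adj_or_eq.mpr (hf h).symm
    calc H.edist (f x) (f z) ≤ H.edist (f x) (f y) + H.edist (f y) (f z) := H.edist_triangle
      _ ≤ 1 + p.length := add_le_add hxy ih
      _ = (Walk.cons h p).length := by simp [add_comm]

theorem IsIsolated.edist_eq_top {u v : V} (hu : G.IsIsolated u) (h : u ≠ v) :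
    G.edist u v = ⊤ :=
  edist_eq_top_of_not_reachable fun ⟨p⟩ => by
    cases p with
    | nil => exact h rfl
    | cons hadj _ => exact hu _ hadj

end SimpleGraph

def IsKIndepSet {V : Type*} (G : SimpleGraph V) (k : ℕ) (s : Finset V) : Prop :=
  ∀ u ∈ s, ∀ v ∈ s, u ≠ v → (k : ℕ∞) < G.edist u v

section KIndep

variable {V : Type*} [Fintype V] {G : SimpleGraph V} {k : ℕ}

theorem bddAbove_card_isKIndepSet (G : SimpleGraph V) (k : ℕ) :
    BddAbove {n | ∃ s : Finset V, s.card = n ∧ IsKIndepSet G k s} :=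
  ⟨Fintype.card V, by rintro n ⟨t, rfl, -⟩; exact t.card_le_univ⟩

theorem IsKIndepSet.card_le_kIndepNum {s : Finset V} (hs : IsKIndepSet G k s) :
    s.card ≤ kIndepNum G k :=
  le_csSup (bddAbove_card_isKIndepSet G k) ⟨s, rfl, hs⟩

theorem exists_isKIndepSet_card_eq_kIndepNum (G : SimpleGraph V) (k : ℕ) :
    ∃ s : Finset V, IsKIndepSet G k s ∧ s.card = kIndepNum G k := by
  obtain ⟨s, hcard, hs⟩ :=
    Nat.sSup_mem (s := {n | ∃ s : Finset V, s.card = n ∧ IsKIndepSet G k s})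
      ⟨0, ∅, rfl, by simp [IsKIndepSet]⟩ (bddAbove_card_isKIndepSet G k)
  exact ⟨s, hs, hcard⟩

theorem kIndepNum_pos [Nonempty V] (G : SimpleGraph V) (k : ℕ) : 0 < kIndepNum G k :=
  (show IsKIndepSet G k {Classical.arbitrary V} by simp [IsKIndepSet]).card_le_kIndepNum

open Classical in
noncomputable def isolatedFinset (G : SimpleGraph V) : Finset V := {v | G.IsIsolated v}

theorem mem_isolatedFinset {v : V} : v ∈ isolatedFinset G ↔ G.IsIsolated v := by
  simp [isolatedFinset]

theorem card_isolatedFinset (G : SimpleGraph V) :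
    (isolatedFinset G).card = Nat.card {v // G.IsIsolated v} := by
  classical
  simp [isolatedFinset, Nat.card_eq_fintype_card, Fintype.card_subtype]

end KIndep

section LexProd

variable {V1 V2 : Type*} {G1 : SimpleGraph V1} {G2 : SimpleGraph V2} {k : ℕ}

theorem edist_fst_le_lexProd_edist (p q : V1 × V2) :
    G1.edist p.1 q.1 ≤ (lexProd G1 G2).edist p q :=
  edist_le_edist_of_adj_imp Prod.fst (fun _ _ h => (Or.symm h).imp_left And.left) p q

theorem lexProd_edist_of_ne {u v : V1} (h : u ≠ v) (a b : V2) :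
    (lexProd G1 G2).edist (u, a) (v, b) = G1.edist u v := by
  classical
  refine le_antisymm ?_ (edist_fst_le_lexProd_edist (u, a) (v, b))
  -- only the start vertex leaves the `b`-layer, so adjacency in `G1` is still preserved
  let f : V1 → V1 × V2 := fun x => if x = u then (u, a) else (x, b)
  have hf : ∀ ⦃x y⦄, G1.Adj x y → f x = f y ∨ (lexProd G1 G2).Adj (f x) (f y) := by
    intro x y hxy
    right; left
    simp only [f]
    split_ifs <;> simp_all
  simpa [f, h.symm] using edist_le_edist_of_adj_imp f hf u v

theorem lexProd_edist_of_isIsolated {u : V1} (hu : G1.IsIsolated u) (a b : V2) :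
    (lexProd G1 G2).edist (u, a) (u, b) = G2.edist a b := by
  classical
  have hfiber :
      ∀ ⦃x y⦄, G2.Adj x y → (u, x) = (u, y) ∨ (lexProd G1 G2).Adj (u, x) (u, y) :=
    fun _ _ h => Or.inr (Or.inr ⟨rfl, h⟩)
  refine le_antisymm (edist_le_edist_of_adj_imp (fun x => (u, x)) hfiber a b) ?_
  -- no edge leaves the fiber over `u`, so collapsing everything outside it to `a` is harmless
  let f : V1 × V2 → V2 := fun p => if p.1 = u then p.2 else a
  have hf : ∀ ⦃p q⦄, (lexProd G1 G2).Adj p q → f p = f q ∨ G2.Adj (f p) (f q) := by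
    rintro ⟨x, c⟩ ⟨y, d⟩ (hxy | ⟨rfl, hcd⟩)
    · have hx : x ≠ u := fun hx => hu _ (hx ▸ hxy)
      have hy : y ≠ u := fun hy => hu _ (hy ▸ hxy.symm)
      simp [f, hx, hy]
    · by_cases hx : x = u <;> simp [f, hx, hcd]
  simpa [f] using edist_le_edist_of_adj_imp f hf (u, a) (u, b)

theorem lexProd_edist_le_two {u : V1} (hu : ¬G1.IsIsolated u) (a b : V2) :
    (lexProd G1 G2).edist (u, a) (u, b) ≤ 2 := by
  obtain ⟨w, hw⟩ := exists_adj_iff_not_isIsolated.mpr hu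
  have hw' : (lexProd G1 G2).Adj (u, a) (w, a) := Or.inl hw
  have hw'' : (lexProd G1 G2).Adj (w, a) (u, b) := Or.inl hw.symm
  simpa using edist_le (Walk.cons hw' (Walk.cons hw'' Walk.nil))

theorem IsKIndepSet.card_fiber_le_one [DecidableEq V1] {S : Finset (V1 × V2)} (hk : 2 ≤ k)
    (hS : IsKIndepSet (lexProd G1 G2) k S) {u : V1} (hu : ¬G1.IsIsolated u) :
    (S.filter (fun p => p.1 = u)).card ≤ 1 := by
  refine Finset.card_le_one.mpr fun ⟨x, a⟩ hp ⟨y, b⟩ hq => by_contra fun hne => ?_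
  simp only [Finset.mem_filter] at hp hq
  obtain ⟨hp, rfl⟩ := hp
  obtain ⟨hq, rfl⟩ := hq
  have := (hS _ hp _ hq hne).trans_le (lexProd_edist_le_two hu a b)
  exact absurd this (not_lt.mpr (by exact_mod_cast hk))

theorem IsKIndepSet.card_fiber_le_kIndepNum [DecidableEq V1] [Fintype V2]
    {S : Finset (V1 × V2)} (hS : IsKIndepSet (lexProd G1 G2) k S) {u : V1}
    (hu : G1.IsIsolated u) : (S.filter (fun p => p.1 = u)).card ≤ kIndepNum G2 k := by
  classical
  have hinj : Set.InjOn Prod.snd (S.filter (fun p => p.1 = u) : Set (V1 × V2)) := by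
    rintro ⟨x, a⟩ hp ⟨y, b⟩ hq (rfl : a = b)
    simp only [Finset.coe_filter, Set.mem_ofPred_eq] at hp hq
    rw [hp.2, hq.2]
  rw [← Finset.card_image_of_injOn hinj]
  refine IsKIndepSet.card_le_kIndepNum fun a ha b hb hab => ?_
  simp only [Finset.mem_image, Finset.mem_filter] at ha hb
  obtain ⟨⟨x, a⟩, ⟨hp, rfl⟩, rfl⟩ := ha
  obtain ⟨⟨y, b⟩, ⟨hq, rfl⟩, rfl⟩ := hb
  rw [← lexProd_edist_of_isIsolated hu]
  exact hS _ hp _ hq (by simpa using hab)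

theorem IsKIndepSet.image_fst [DecidableEq V1] {S : Finset (V1 × V2)}
    (hS : IsKIndepSet (lexProd G1 G2) k S) : IsKIndepSet G1 k (S.image Prod.fst) := by
  intro u hu v hv huv
  obtain ⟨⟨u, a⟩, hp, rfl⟩ := Finset.mem_image.mp hu
  obtain ⟨⟨v, b⟩, hq, rfl⟩ := Finset.mem_image.mp hv
  rw [← lexProd_edist_of_ne huv a b]
  exact hS _ hp _ hq (by simpa using fun h => absurd h huv)

end LexProd

section LexProdIsolated

variable {V1 V2 : Type*} [Fintype V1] {G1 : SimpleGraph V1} {G2 : SimpleGraph V2} {k : ℕ}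

theorem isKIndepSet_lexProd [DecidableEq V1] [DecidableEq V2] {A : Finset V1} {B : Finset V2}
    (hA : IsKIndepSet G1 k A) (hB : IsKIndepSet G2 k B) (b : V2) :
    IsKIndepSet (lexProd G1 G2) k
      ((A \ isolatedFinset G1) ×ˢ {b} ∪ isolatedFinset G1 ×ˢ B) := by
  rintro ⟨u, a⟩ hp ⟨v, c⟩ hq hne
  simp only [Finset.mem_union, Finset.mem_product, Finset.mem_sdiff, Finset.mem_singleton,
    mem_isolatedFinset] at hp hq
  by_cases huv : u = v
  · subst huv
    have hac : a ≠ c := fun h => hne (h ▸ rfl)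
    have hu : G1.IsIsolated u := by
      rcases hp with ⟨⟨-, hu⟩, rfl⟩ | ⟨hu, -⟩
      · rcases hq with ⟨-, rfl⟩ | ⟨hu', -⟩
        exacts [absurd rfl hac, absurd hu' hu]
      · exact hu
    have ha : a ∈ B := hp.elim (fun h => absurd hu h.1.2) And.right
    have hc : c ∈ B := hq.elim (fun h => absurd hu h.1.2) And.right
    rw [lexProd_edist_of_isIsolated hu]
    exact hB a ha c hc hac
  · rw [lexProd_edist_of_ne huv]
    by_cases hu : G1.IsIsolated u
    · rw [hu.edist_eq_top huv]
      exact ENat.natCast_lt_top k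
    by_cases hv : G1.IsIsolated v
    · rw [edist_comm, hv.edist_eq_top (Ne.symm huv)]
      exact ENat.natCast_lt_top k
    have huA : u ∈ A := hp.elim (fun h => h.1.1) fun h => absurd h.1 hu
    have hvA : v ∈ A := hq.elim (fun h => h.1.1) fun h => absurd h.1 hv
    exact hA u huA v hvA huv

theorem le_kIndepNum_lexProd [Fintype V2] [Nonempty V2] (G1 : SimpleGraph V1)
    (G2 : SimpleGraph V2) (k : ℕ) :
    kIndepNum G1 k + (isolatedFinset G1).card * (kIndepNum G2 k - 1) ≤
      kIndepNum (lexProd G1 G2) k := by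
  classical
  obtain ⟨A, hA, hAcard⟩ := exists_isKIndepSet_card_eq_kIndepNum G1 k
  obtain ⟨B, hB, hBcard⟩ := exists_isKIndepSet_card_eq_kIndepNum G2 k
  set I := isolatedFinset G1
  have hprod := (isKIndepSet_lexProd hA hB (Classical.arbitrary V2)).card_le_kIndepNum
  have hdisj : Disjoint ((A \ I) ×ˢ {Classical.arbitrary V2}) (I ×ˢ B) :=
    Finset.disjoint_product.mpr (Or.inl Finset.sdiff_disjoint)
  rw [Finset.card_union_of_disjoint hdisj, Finset.card_product, Finset.card_product,
    Finset.card_singleton, hBcard] at hprod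
  have hA_le : A.card ≤ (A \ I).card + I.card :=
    (Finset.card_sdiff_add_card A I).symm ▸ Finset.card_le_card Finset.subset_union_left
  obtain ⟨m, hm⟩ : ∃ m, kIndepNum G2 k = m + 1 :=
    ⟨_, (Nat.succ_pred_eq_of_pos (kIndepNum_pos G2 k)).symm⟩
  rw [hm] at hprod
  rw [hm, Nat.add_sub_cancel, ← hAcard]
  linarith

theorem IsKIndepSet.card_le_of_lexProd [Fintype V2] {S : Finset (V1 × V2)} (hk : 2 ≤ k)
    (hS : IsKIndepSet (lexProd G1 G2) k S) :
    S.card ≤ kIndepNum G1 k + (isolatedFinset G1).card * (kIndepNum G2 k - 1) := by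
  classical
  set I := isolatedFinset G1
  set T := S.image Prod.fst
  have hfiber (u : V1) :
      (S.filter (fun p => p.1 = u)).card ≤ 1 + if u ∈ I then kIndepNum G2 k - 1 else 0 := by
    by_cases hu : G1.IsIsolated u
    · rw [if_pos (mem_isolatedFinset.mpr hu)]
      have := hS.card_fiber_le_kIndepNum hu
      omega
    · rw [if_neg (mt mem_isolatedFinset.mp hu)]
      exact (hS.card_fiber_le_one hk hu).trans le_self_add
  calc S.card = ∑ u ∈ T, (S.filter (fun p => p.1 = u)).card := Finset.card_eq_sum_card_image _ _
    _ ≤ ∑ u ∈ T, (1 + if u ∈ I then kIndepNum G2 k - 1 else 0) :=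
        Finset.sum_le_sum fun u _ => hfiber u
    _ = T.card + (T ∩ I).card * (kIndepNum G2 k - 1) := by
        rw [Finset.sum_add_distrib, Finset.sum_ite_mem]
        simp
    _ ≤ kIndepNum G1 k + I.card * (kIndepNum G2 k - 1) := by
        gcongr
        · exact hS.image_fst.card_le_kIndepNum
        · exact Finset.inter_subset_right

end LexProdIsolated

theorem kIndepNum_lexProd {V1 V2 : Type*} [Fintype V1] [Fintype V2] [Nonempty V2]
    (G1 : SimpleGraph V1) (G2 : SimpleGraph V2) (k : ℕ) (hk : 2 ≤ k) :
    kIndepNum (lexProd G1 G2) k =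
      kIndepNum G1 k + Nat.card {v : V1 // ∀ w, ¬ G1.Adj v w} * (kIndepNum G2 k - 1) := by
  obtain ⟨S, hS, hcard⟩ := exists_isKIndepSet_card_eq_kIndepNum (lexProd G1 G2) k
  have hI : Nat.card {v : V1 // ∀ w, ¬ G1.Adj v w} = (isolatedFinset G1).card :=
    (card_isolatedFinset G1).symm
  rw [hI]
  exact le_antisymm (hcard ▸ hS.card_le_of_lexProd hk) (le_kIndepNum_lexProd G1 G2 k)
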